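/- Let A ⊆ {1,…,p} with T ⊆ A and let i ∉ A with |A ∪ {i}| ≤ 4s*. Assume event E_n holds and that βD ≥ 2L. Then log(π(A ∪ {i}) / π(A)) ≤ −(D/2) log p; equivalently π(A ∪ {i}) ≤ p^{−D/2} π(A). -/

import Mathlib

/-!
Adding column `i` to `A` enlarges the column span by the direction `v = (I - Φ_A) X_i`, which is
orthogonal to span A, so `‖Φ_{A ∪ {i}} Y‖² - ‖Φ_A Y‖² = ⟨v, Y⟩² / ‖v‖²`. Since `T ⊆ A`, `Xθ` lies in
span A and `⟨v, Y⟩ = ⟨v, ε⟩`; the event `E_n` bounds its square by `n L ν log p`, while the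
restricted eigenvalue condition gives `‖v‖² ≥ n ν`. Hence `G` grows by at most
`L log p / β ≤ (D/2) log p`, whereas the trace penalty does not decrease and the size penalty grows
by `D log p`.
-/

open scoped BigOperators
open Finset

noncomputable section

/-- Span of the columns `X j`, `j ∈ S`. -/
def colSpan {n p : ℕ} (X : Fin p → EuclideanSpace ℝ (Fin n)) (S : Finset (Fin p)) :
    Submodule ℝ (EuclideanSpace ℝ (Fin n)) :=
  Submodule.span ℝ (X '' ↑S)

/-- `Φ_S`, the orthogonal projection of ℝ^n onto the span of the columns in `S`. -/
noncomputable def proj {n p : ℕ} (X : Fin p → EuclideanSpace ℝ (Fin n)) (S : Finset (Fin p)) :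
    EuclideanSpace ℝ (Fin n) →ₗ[ℝ] EuclideanSpace ℝ (Fin n) :=
  (colSpan X S).subtype ∘ₗ (Submodule.orthogonalProjection (colSpan X S)).toLinearMap

/-- Restricted eigenvalue condition: `‖X_S w‖² ≥ n ν ‖w‖²` for all `S` with `|S| ≤ m`. -/
def RECond {n p : ℕ} (X : Fin p → EuclideanSpace ℝ (Fin n)) (ν : ℝ) (m : ℕ) : Prop :=
  ∀ S : Finset (Fin p), S.card ≤ m → ∀ w : Fin p → ℝ,
    (n : ℝ) * ν * ∑ j ∈ S, w j ^ 2 ≤ ‖∑ j ∈ S, w j • X j‖ ^ 2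

/-- The unnormalized weight exp(G(S,Y) − m(S)), where G(S,Y) = ‖Φ_S Y‖²/β and
m(S) = D|S| log p + (2/β) trace(Φ_S) + (4n/β) 1{|S| > 4s}. -/
noncomputable def postWt {n p : ℕ} (X : Fin p → EuclideanSpace ℝ (Fin n))
    (Y : EuclideanSpace ℝ (Fin n)) (β D : ℝ) (s : ℕ) (S : Finset (Fin p)) : ℝ :=
  Real.exp (‖proj X S Y‖ ^ 2 / β -
    (D * S.card * Real.log p +
      2 * LinearMap.trace ℝ (EuclideanSpace ℝ (Fin n)) (proj X S) / β +
      if 4 * s < S.card then 4 * n / β else 0))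

/-- The probability distribution π(S) ∝ exp(G(S,Y) − m(S)) on subsets of {1,…,p}. -/
noncomputable def postPi {n p : ℕ} (X : Fin p → EuclideanSpace ℝ (Fin n))
    (Y : EuclideanSpace ℝ (Fin n)) (β D : ℝ) (s : ℕ) (S : Finset (Fin p)) : ℝ :=
  postWt X Y β D s S / ∑ S' : Finset (Fin p), postWt X Y β D s S'

section OrthogonalProjection

open Submodule

variable {E : Type*} [NormedAddCommGroup E] [InnerProductSpace ℝ E]

lemma sup_span_singleton_sub_of_mem (K : Submodule ℝ E) {x y : E} (hy : y ∈ K) :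
    K ⊔ ℝ ∙ (x - y) = K ⊔ ℝ ∙ x := by
  refine le_antisymm (sup_le le_sup_left ?_) (sup_le le_sup_left ?_) <;>
    rw [span_singleton_le_iff_mem]
  · exact sub_mem (mem_sup_right (mem_span_singleton_self x)) (mem_sup_left hy)
  · simpa using add_mem (mem_sup_right (mem_span_singleton_self (x - y))) (mem_sup_left hy)

lemma Submodule.IsOrtho.starProjection_sup {U V : Submodule ℝ E} [U.HasOrthogonalProjection]
    [V.HasOrthogonalProjection] [(U ⊔ V).HasOrthogonalProjection] (h : U ⟂ V) (y : E) :
    (U ⊔ V).starProjection y = U.starProjection y + V.starProjection y := by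
  refine eq_starProjection_of_mem_of_inner_eq_zero
    (add_mem (mem_sup_left (starProjection_apply_mem U y))
      (mem_sup_right (starProjection_apply_mem V y))) fun w hw => ?_
  have hU : y - (U.starProjection y + V.starProjection y) ∈ Uᗮ := by
    rw [← sub_sub]
    exact sub_mem (sub_starProjection_mem_orthogonal y) (h.ge (starProjection_apply_mem V y))
  have hV : y - (U.starProjection y + V.starProjection y) ∈ Vᗮ := by
    rw [add_comm, ← sub_sub]
    exact sub_mem (sub_starProjection_mem_orthogonal y) (h.le (starProjection_apply_mem U y))
  exact inner_left_of_mem_orthogonal hw (inf_orthogonal U V ▸ ⟨hU, hV⟩)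

lemma norm_starProjection_sup_span_singleton_sq (K : Submodule ℝ E) [K.HasOrthogonalProjection]
    {v : E} (hv : v ∈ Kᗮ) [(K ⊔ ℝ ∙ v).HasOrthogonalProjection] (y : E) :
    ‖(K ⊔ ℝ ∙ v).starProjection y‖ ^ 2 =
      ‖K.starProjection y‖ ^ 2 + inner ℝ v y ^ 2 / ‖v‖ ^ 2 := by
  have hKv : K ⟂ ℝ ∙ v :=
    isOrtho_comm.mp (isOrtho_iff_le.mpr ((span_singleton_le_iff_mem _ _).mpr hv))
  rw [hKv.starProjection_sup, norm_add_sq_real,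
    hKv.inner_eq (starProjection_apply_mem K y) (starProjection_apply_mem _ y),
    starProjection_singleton, norm_smul, mul_pow, Real.norm_eq_abs, sq_abs]
  simp only [RCLike.ofReal_real_eq_id, id, mul_zero, add_zero]
  rcases eq_or_ne v 0 with rfl | hv0
  · simp
  · field_simp

end OrthogonalProjection

section Regression

variable {n p : ℕ} (X : Fin p → EuclideanSpace ℝ (Fin n))

lemma proj_apply (S : Finset (Fin p)) (y : EuclideanSpace ℝ (Fin n)) :
    proj X S y = (colSpan X S).starProjection y :=
  rfl

lemma colSpan_insert (A : Finset (Fin p)) (i : Fin p) :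
    colSpan X (insert i A) = colSpan X A ⊔ ℝ ∙ X i := by
  rw [colSpan, colSpan, Finset.coe_insert, Set.image_insert_eq, Submodule.span_insert, sup_comm]

lemma trace_proj_mono {S S' : Finset (Fin p)} (h : S ⊆ S') :
    LinearMap.trace ℝ _ (proj X S) ≤ LinearMap.trace ℝ _ (proj X S') := by
  have isProj (S : Finset (Fin p)) : LinearMap.IsProj (colSpan X S) (proj X S) :=
    ⟨fun _ => Submodule.coe_mem _, fun _ hx => Submodule.starProjection_eq_self_iff.mpr hx⟩
  rw [(isProj S).trace, (isProj S').trace]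
  exact_mod_cast Submodule.finrank_mono (Submodule.span_mono (Set.image_mono h))

lemma sum_smul_mem_colSpan {θ : Fin p → ℝ} {A : Finset (Fin p)} (hθ : ∀ j, θ j ≠ 0 → j ∈ A) :
    ∑ j, θ j • X j ∈ colSpan X A := by
  rw [← Finset.sum_subset (Finset.subset_univ A) fun j _ hj => by
    rw [not_imp_comm.mp (hθ j) hj, zero_smul]]
  exact (Submodule.mem_span_image_finset_iff_exists_fun' ℝ).mpr ⟨θ, rfl⟩

lemma RECond.mul_le_norm_sub_sq {ν : ℝ} {m : ℕ} (hν : 0 ≤ ν) (hRE : RECond X ν m)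
    {A : Finset (Fin p)} {i : Fin p} (hi : i ∉ A) (hcard : (insert i A).card ≤ m)
    {y : EuclideanSpace ℝ (Fin n)} (hy : y ∈ colSpan X A) :
    n * ν ≤ ‖X i - y‖ ^ 2 := by
  obtain ⟨c, rfl⟩ := (Submodule.mem_span_image_finset_iff_exists_fun' ℝ).mp hy
  set w : Fin p → ℝ := Function.update (-c) i 1
  have hwi : w i = 1 := Function.update_self ..
  have hwA : ∀ j ∈ A, w j = -c j := fun j hj =>
    Function.update_of_ne (ne_of_mem_of_not_mem hj hi) ..
  have hsum : ∑ j ∈ insert i A, w j • X j = X i - ∑ j ∈ A, c j • X j := by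
    rw [Finset.sum_insert hi, Finset.sum_congr rfl fun j hj => by rw [hwA j hj],
      hwi, one_smul, sub_eq_add_neg, ← Finset.sum_neg_distrib]
    simp only [neg_smul]
  have hw : 1 ≤ ∑ j ∈ insert i A, w j ^ 2 := by
    rw [Finset.sum_insert hi, hwi, one_pow, le_add_iff_nonneg_right]
    exact Finset.sum_nonneg fun j _ => sq_nonneg _
  calc (n : ℝ) * ν ≤ n * ν * ∑ j ∈ insert i A, w j ^ 2 := le_mul_of_one_le_right (by positivity) hw
    _ ≤ ‖X i - ∑ j ∈ A, c j • X j‖ ^ 2 := hsum ▸ hRE _ hcard w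

lemma norm_proj_insert_sq (A : Finset (Fin p)) (i : Fin p) (y : EuclideanSpace ℝ (Fin n)) :
    ‖proj X (insert i A) y‖ ^ 2 = ‖proj X A y‖ ^ 2 +
      inner ℝ (X i - proj X A (X i)) y ^ 2 / ‖X i - proj X A (X i)‖ ^ 2 := by
  rw [proj_apply, proj_apply, proj_apply, colSpan_insert,
    ← sup_span_singleton_sub_of_mem _ (Submodule.starProjection_apply_mem _ (X i))]
  exact norm_starProjection_sup_span_singleton_sq _
    (Submodule.sub_starProjection_mem_orthogonal _) y

lemma norm_proj_insert_sq_le {ν M : ℝ} {m : ℕ} (hν : 0 ≤ ν) (hRE : RECond X ν m)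
    {A : Finset (Fin p)} {i : Fin p} (hi : i ∉ A) (hcard : (insert i A).card ≤ m)
    {ε Y : EuclideanSpace ℝ (Fin n)} (hY : Y - ε ∈ colSpan X A) (hM : 0 ≤ M)
    (hε : inner ℝ (X i - proj X A (X i)) ε ^ 2 ≤ n * ν * M) :
    ‖proj X (insert i A) Y‖ ^ 2 ≤ ‖proj X A Y‖ ^ 2 + M := by
  set v := X i - proj X A (X i)
  have hvK : v ∈ (colSpan X A)ᗮ := Submodule.sub_starProjection_mem_orthogonal _
  have hvY : inner ℝ v Y = inner ℝ v ε := by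
    rw [← sub_eq_zero, ← inner_sub_right]
    exact Submodule.inner_left_of_mem_orthogonal hY hvK
  have hv : n * ν ≤ ‖v‖ ^ 2 :=
    hRE.mul_le_norm_sub_sq X hν hi hcard (Submodule.starProjection_apply_mem _ _)
  rw [norm_proj_insert_sq, hvY, add_le_add_iff_left]
  refine div_le_of_le_mul₀ (sq_nonneg _) hM (hε.trans ?_)
  rw [mul_comm M]
  exact mul_le_mul_of_nonneg_right hv hM

lemma postPi_div_postPi (Y : EuclideanSpace ℝ (Fin n)) (β D : ℝ) (s : ℕ) (S S' : Finset (Fin p)) :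
    postPi X Y β D s S / postPi X Y β D s S' = postWt X Y β D s S / postWt X Y β D s S' :=
  div_div_div_cancel_right₀
    (Finset.sum_pos (fun _ _ => Real.exp_pos _) ⟨∅, Finset.mem_univ _⟩).ne' _ _

end Regression

theorem stmt6_general {n p s : ℕ}
    (X : Fin p → EuclideanSpace ℝ (Fin n))
    {ν : ℝ} (hν : 0 < ν) (hRE : RECond X ν (6 * s))
    (θ : Fin p → ℝ) (T : Finset (Fin p)) (hT : T = Finset.univ.filter fun j => θ j ≠ 0)
    (ε Y : EuclideanSpace ℝ (Fin n)) (hY : Y = (∑ j, θ j • X j) + ε)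
    (β D L : ℝ) (hβ : 0 < β) (hL : 0 < L)
    (hE : ∀ S : Finset (Fin p), S.card < 6 * s → ∀ j ∉ S,
      (inner ℝ (X j - proj X S (X j)) ε : ℝ) ^ 2 ≤ (n : ℝ) * L * ν * Real.log p)
    (hβD : 2 * L ≤ β * D)
    (A : Finset (Fin p)) (hTA : T ⊆ A) (i : Fin p) (hi : i ∉ A)
    (hcard : (insert i A).card ≤ 4 * s) :
    Real.log (postPi X Y β D s (insert i A) / postPi X Y β D s A) ≤
      -(D / 2) * Real.log p := by
  have hlog : 0 ≤ Real.log p := Real.log_natCast_nonneg p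
  have hA : (insert i A).card = A.card + 1 := Finset.card_insert_of_notMem hi
  have hgain : ‖proj X (insert i A) Y‖ ^ 2 ≤ ‖proj X A Y‖ ^ 2 + L * Real.log p := by
    refine norm_proj_insert_sq_le X (ε := ε) hν.le hRE hi (by omega) ?_ (by positivity) ?_
    · rw [hY, add_sub_cancel_right]
      exact sum_smul_mem_colSpan X fun j hj =>
        hTA (hT ▸ Finset.mem_filter.mpr ⟨Finset.mem_univ j, hj⟩)
    · linarith [hE A (by omega) i hi]
  have hgainβ : ‖proj X (insert i A) Y‖ ^ 2 / β - ‖proj X A Y‖ ^ 2 / β ≤ D / 2 * Real.log p := by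
    rw [← sub_div, div_le_iff₀ hβ]
    linarith [mul_le_mul_of_nonneg_right hβD hlog]
  have htrace : 2 * LinearMap.trace ℝ _ (proj X A) / β ≤
      2 * LinearMap.trace ℝ _ (proj X (insert i A)) / β := by
    gcongr
    exact trace_proj_mono X (Finset.subset_insert i A)
  rw [postPi_div_postPi, postWt, postWt, ← Real.exp_sub, Real.log_exp, if_neg (by omega),
    if_neg (by omega), hA]
  push_cast
  linarith

/-- if T ⊆ A, i ∉ A, |A ∪ {i}| ≤ 4s*, event E_n holds and βD ≥ 2L, then
log(π(A ∪ {i})/π(A)) ≤ −(D/2) log p. -/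
theorem stmt6 {n p s : ℕ} (hn : 0 < n) (hp : 2 ≤ p) (hs : 0 < s) (hsp : 6 * s ≤ p)
    (X : Fin p → EuclideanSpace ℝ (Fin n))
    (hX : ∀ j, ‖X j‖ = Real.sqrt n)
    {ν : ℝ} (hν : 0 < ν) (hRE : RECond X ν (6 * s))
    (θ : Fin p → ℝ) (T : Finset (Fin p)) (hT : T = Finset.univ.filter fun j => θ j ≠ 0)
    (hTcard : T.card = s)
    (ε Y : EuclideanSpace ℝ (Fin n)) (hY : Y = (∑ j, θ j • X j) + ε)
    (β D L : ℝ) (hβ : 0 < β) (hD : 0 < D) (hL : 0 < L)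
    (hE : ∀ S : Finset (Fin p), S.card < 6 * s → ∀ j ∉ S,
      (inner ℝ (X j - proj X S (X j)) ε : ℝ) ^ 2 ≤ (n : ℝ) * L * ν * Real.log p)
    (hβD : 2 * L ≤ β * D)
    (A : Finset (Fin p)) (hTA : T ⊆ A) (i : Fin p) (hi : i ∉ A)
    (hcard : (insert i A).card ≤ 4 * s) :
    Real.log (postPi X Y β D s (insert i A) / postPi X Y β D s A) ≤
      -(D / 2) * Real.log p :=
  stmt6_general X hν hRE θ T hT ε Y hY β D L hβ hL hE hβD A hTA i hi hcard

end
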